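/- The exponential map on the manifold of Hermitian positive definite matrices is equivariant under congruence: for any invertible matrix a, Hermitian positive definite p, and Hermitian h, one has a* Exp_p(h) a = Exp_{a* p a}(a* h a). -/

import Mathlib

open Matrix
open scoped ComplexOrder Classical

/-- Matrix logarithm of a Hermitian (in particular HPD) matrix, via the spectral theorem. -/
noncomputable def mLog {d : ℕ} (A : Matrix (Fin d) (Fin d) ℂ) : Matrix (Fin d) (Fin d) ℂ :=
  if hA : A.IsHermitian then
    (hA.eigenvectorUnitary : Matrix (Fin d) (Fin d) ℂ) *
      Matrix.diagonal (fun i => (Real.log (hA.eigenvalues i) : ℂ)) *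
      (star hA.eigenvectorUnitary : Matrix (Fin d) (Fin d) ℂ)
  else 0

/-- Matrix exponential. -/
noncomputable def mExp {d : ℕ} (A : Matrix (Fin d) (Fin d) ℂ) : Matrix (Fin d) (Fin d) ℂ :=
  NormedSpace.exp A

/-- Hermitian positive (semi)definite square root. -/
noncomputable def msqrt {d : ℕ} (A : Matrix (Fin d) (Fin d) ℂ) : Matrix (Fin d) (Fin d) ℂ :=
  if hA : A.PosSemidef then
    (hA.1.eigenvectorUnitary : Matrix (Fin d) (Fin d) ℂ) *
      Matrix.diagonal ((↑) ∘ (Real.sqrt ∘ hA.1.eigenvalues)) *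
      (star hA.1.eigenvectorUnitary : Matrix (Fin d) (Fin d) ℂ)
  else 1

/-- Frobenius norm. -/
noncomputable def frobNorm {d : ℕ} (A : Matrix (Fin d) (Fin d) ℂ) : ℝ :=
  Real.sqrt ((Aᴴ * A).trace.re)

/-- Affine-invariant Riemannian distance. -/
noncomputable def deltaR {d : ℕ} (p₁ p₂ : Matrix (Fin d) (Fin d) ℂ) : ℝ :=
  frobNorm (mLog ((msqrt p₁)⁻¹ * p₂ * (msqrt p₁)⁻¹))

/-- Real matrix power of an HPD matrix: `x^t = Exp (t • Log x)`. -/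
noncomputable def mPow {d : ℕ} (A : Matrix (Fin d) (Fin d) ℂ) (t : ℝ) : Matrix (Fin d) (Fin d) ℂ :=
  mExp ((t : ℂ) • mLog A)

/-- Riemannian logarithmic map at `p`. -/
noncomputable def logMap {d : ℕ} (p q : Matrix (Fin d) (Fin d) ℂ) : Matrix (Fin d) (Fin d) ℂ :=
  msqrt p * mLog ((msqrt p)⁻¹ * q * (msqrt p)⁻¹) * msqrt p

/-- Riemannian exponential map at `p`. -/
noncomputable def expMap {d : ℕ} (p h : Matrix (Fin d) (Fin d) ℂ) : Matrix (Fin d) (Fin d) ℂ :=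
  msqrt p * mExp ((msqrt p)⁻¹ * h * (msqrt p)⁻¹) * msqrt p

/-- Affine-invariant geodesic from `p₁` to `p₂`. -/
noncomputable def geo {d : ℕ} (p₁ p₂ : Matrix (Fin d) (Fin d) ℂ) (t : ℝ) :
    Matrix (Fin d) (Fin d) ℂ :=
  msqrt p₁ * mPow ((msqrt p₁)⁻¹ * p₂ * (msqrt p₁)⁻¹) t * msqrt p₁

/-!
With `s = p^{1/2}` and `r = (aᴴ p a)^{1/2}`, the identity `aᴴ s² a = r²` says that
`u = r⁻¹ aᴴ s` has inverse `s a r⁻¹`. The argument `r⁻¹ (aᴴ h a) r⁻¹` of the exponential at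
`aᴴ p a` is then the `u`-conjugate of the argument `s⁻¹ h s⁻¹` at `p`, and the exponential
commutes with conjugation.
-/
namespace Matrix

variable {m 𝔸 : Type*} [Fintype m] [DecidableEq m] [NormedCommRing 𝔸] [NormedAlgebra ℚ 𝔸]
  [CompleteSpace 𝔸]

theorem exp_sandwich_congr {s r a b x : Matrix m m 𝔸} (hs : IsUnit s.det) (hr : IsUnit r.det)
    (hsr : b * (s * s) * a = r * r) :
    b * (s * NormedSpace.exp (s⁻¹ * x * s⁻¹) * s) * a =
      r * NormedSpace.exp (r⁻¹ * (b * x * a) * r⁻¹) * r := by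
  set u := r⁻¹ * b * s
  have hu : u * (s * a * r⁻¹) = 1 := by
    calc u * (s * a * r⁻¹) = r⁻¹ * (b * (s * s) * a) * r⁻¹ := by simp only [u, mul_assoc]
      _ = 1 := by
        rw [hsr, ← mul_assoc, nonsing_inv_mul _ hr, one_mul, mul_nonsing_inv _ hr]
  have hu_inv : u⁻¹ = s * a * r⁻¹ := inv_eq_right_inv hu
  have hu_unit : IsUnit u := (isUnit_iff_isUnit_det u).mpr (isUnit_det_of_right_inverse hu)
  have hconj : r⁻¹ * (b * x * a) * r⁻¹ = u * (s⁻¹ * x * s⁻¹) * u⁻¹ := by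
    rw [hu_inv]
    simp only [u, mul_assoc, mul_nonsing_inv_cancel_left _ _ hs,
      nonsing_inv_mul_cancel_left _ _ hs]
  rw [hconj, exp_conj _ _ hu_unit, hu_inv]
  simp only [u, mul_assoc, mul_nonsing_inv_cancel_left _ _ hr, nonsing_inv_mul _ hr, mul_one]

end Matrix

lemma msqrt_mul_self {d : ℕ} {p : Matrix (Fin d) (Fin d) ℂ} (hp : p.PosSemidef) :
    msqrt p * msqrt p = p := by
  conv_rhs => rw [hp.1.spectral_theorem]
  rw [msqrt, dif_pos hp, ← Unitary.conjStarAlgAut_apply (S := ℂ), ← map_mul,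
    diagonal_mul_diagonal]
  congr 2
  ext i
  simp [← Complex.ofReal_mul, Real.mul_self_sqrt (hp.eigenvalues_nonneg i)]

lemma isUnit_det_msqrt {d : ℕ} {p : Matrix (Fin d) (Fin d) ℂ} (hp : p.PosDef) :
    IsUnit (msqrt p).det := by
  have hdet : (msqrt p).det * (msqrt p).det = p.det := by
    rw [← det_mul, msqrt_mul_self hp.posSemidef]
  exact isUnit_of_mul_isUnit_left (hdet ▸ hp.det_pos.ne'.isUnit)

theorem expMap_congruence_equivariant_general {d : ℕ} (p h a : Matrix (Fin d) (Fin d) ℂ)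
    (hp : p.PosDef) (ha : IsUnit a.det) :
    aᴴ * expMap p h * a = expMap (aᴴ * p * a) (aᴴ * h * a) := by
  have hq : (aᴴ * p * a).PosDef :=
    hp.conjTranspose_mul_mul_same <|
      mulVec_injective_iff_isUnit.mpr ((isUnit_iff_isUnit_det a).mpr ha)
  simp only [expMap, mExp]
  refine exp_sandwich_congr (isUnit_det_msqrt hp) (isUnit_det_msqrt hq) ?_
  rw [msqrt_mul_self hp.posSemidef, msqrt_mul_self hq.posSemidef]

theorem expMap_congruence_equivariant {d : ℕ} (p h a : Matrix (Fin d) (Fin d) ℂ)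
    (hp : p.PosDef) (hh : h.IsHermitian) (ha : IsUnit a.det) :
    aᴴ * expMap p h * a = expMap (aᴴ * p * a) (aᴴ * h * a) :=
  expMap_congruence_equivariant_general p h a hp ha
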